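/- arXiv:math/0205041 — 4 statements merged into one kernel-verified Lean document; each statement's English description precedes it below -/
import Mathlib

section
/- For every positive integer n and every (Z₀,Z₁,Z₂) ∈ ℂ³, one has Σ_{(i₀,i₁,i₂,j₀,j₁,k₀,k₂) ∈ S_n} |Z₀|^{2(i₀+j₀+k₀)} |Z₁|^{2(i₁+j₁)} |Z₂|^{2(i₂+k₂)} ≤ ((n+1)³(n+2)/2) · D(Z)ⁿ. Consequently, for every (Z₀,Z₁,Z₂) ≠ (0,0,0), (1/n)·log( Σ_{(i₀,i₁,i₂,j₀,j₁,k₀,k₂) ∈ S_n} |Z₀|^{2(i₀+j₀+k₀)} |Z₁|^{2(i₁+j₁)} |Z₂|^{2(i₂+k₂)} / D(Z)ⁿ ) ≤ (1/n)·log((n+1)³(n+2)/2), a bound independent of Z and uniformly bounded in n. -/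
open scoped BigOperators

/-- The index set `S_n`: tuples `(i₀,i₁,i₂,j₀,j₁,k₀,k₂)` of nonnegative integers
with `i₀+i₁+i₂ = n`, `j₀+j₁ = n`, `k₀+k₂ = n`. -/
def indexSet (n : ℕ) : Finset (ℕ × ℕ × ℕ × ℕ × ℕ × ℕ × ℕ) :=
  (Finset.range (n + 1) ×ˢ Finset.range (n + 1) ×ˢ Finset.range (n + 1) ×ˢ
      Finset.range (n + 1) ×ˢ Finset.range (n + 1) ×ˢ Finset.range (n + 1) ×ˢ
      Finset.range (n + 1)).filter
    fun t => t.1 + t.2.1 + t.2.2.1 = n ∧ t.2.2.2.1 + t.2.2.2.2.1 = n ∧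
      t.2.2.2.2.2.1 + t.2.2.2.2.2.2 = n

/-- `D(Z) = (|Z₀|²+|Z₁|²+|Z₂|²)(|Z₀|²+|Z₁|²)(|Z₀|²+|Z₂|²)`. -/
noncomputable def Dfun (Z : ℂ × ℂ × ℂ) : ℝ :=
  (‖Z.1‖ ^ 2 + ‖Z.2.1‖ ^ 2 + ‖Z.2.2‖ ^ 2) *
    (‖Z.1‖ ^ 2 + ‖Z.2.1‖ ^ 2) *
    (‖Z.1‖ ^ 2 + ‖Z.2.2‖ ^ 2)

/-- The weighted sum of monomial norms over `S_n`. -/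
noncomputable def weightedSum (n : ℕ) (Z : ℂ × ℂ × ℂ) : ℝ :=
  ∑ t ∈ indexSet n,
    ‖Z.1‖ ^ (2 * (t.1 + t.2.2.2.1 + t.2.2.2.2.2.1)) *
      ‖Z.2.1‖ ^ (2 * (t.2.1 + t.2.2.2.2.1)) *
      ‖Z.2.2‖ ^ (2 * (t.2.2.1 + t.2.2.2.2.2.2))

/-!
With `A = ‖Z₀‖²`, `B = ‖Z₁‖²`, `C = ‖Z₂‖²`, the summand indexed by `S_n` splits as
`A^i₀ B^i₁ C^i₂ · A^j₀ B^j₁ · A^k₀ C^k₂`, so the weighted sum factors as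
`h_n(A,B,C) · h_n(A,B) · h_n(A,C)` with `h_n` the complete homogeneous polynomial of degree `n`.
For nonnegative arguments `h_n` is dominated termwise by the multinomial expansion of the `n`-th
power of the sum of its arguments, whence the weighted sum is at most `D(Z)ⁿ`. This is already
sharper than the claimed bound, as `(n+1)³(n+2)/2 ≥ 1`, and the logarithm of the ratio is `≤ 0`.
Uniformity in `n` comes from `log ((n+1)³(n+2)/2) ≤ 4 log (n+2) ≤ 4 (n+1)`.
-/

open Finset

section CompleteHomogeneous

variable {R : Type*} [CommSemiring R]

def completeHomogeneous₂ (n : ℕ) (a b : R) : R :=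
  ∑ p ∈ antidiagonal n, a ^ p.1 * b ^ p.2

def completeHomogeneous₃ (n : ℕ) (a b c : R) : R :=
  ∑ p ∈ antidiagonal n, a ^ p.1 * completeHomogeneous₂ p.2 b c

end CompleteHomogeneous

section Ordered

variable {R : Type*} [CommSemiring R] [PartialOrder R] [IsOrderedRing R] {a b c : R}

theorem completeHomogeneous₂_nonneg (ha : 0 ≤ a) (hb : 0 ≤ b) (n : ℕ) :
    0 ≤ completeHomogeneous₂ n a b :=
  sum_nonneg fun _ _ => by positivity

theorem completeHomogeneous₂_le_add_pow (ha : 0 ≤ a) (hb : 0 ≤ b) (n : ℕ) :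
    completeHomogeneous₂ n a b ≤ (a + b) ^ n := by
  rw [completeHomogeneous₂, Nat.sum_antidiagonal_eq_sum_range_succ_mk, add_pow]
  refine sum_le_sum fun k hk => ?_
  have hchoose : 1 ≤ (n.choose k : R) :=
    mod_cast Nat.mono_cast (α := R) (Nat.choose_pos (mem_range_succ_iff.mp hk))
  exact le_mul_of_one_le_right (by positivity) hchoose

theorem completeHomogeneous₃_le_add_pow (ha : 0 ≤ a) (hb : 0 ≤ b) (hc : 0 ≤ c) (n : ℕ) :
    completeHomogeneous₃ n a b c ≤ (a + b + c) ^ n :=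
  calc completeHomogeneous₃ n a b c ≤ completeHomogeneous₂ n a (b + c) :=
        sum_le_sum fun p _ =>
          mul_le_mul_of_nonneg_left (completeHomogeneous₂_le_add_pow hb hc p.2) (pow_nonneg ha _)
    _ ≤ (a + b + c) ^ n := by
        rw [add_assoc]; exact completeHomogeneous₂_le_add_pow ha (add_nonneg hb hc) n

end Ordered

theorem weightedSum_eq_mul (n : ℕ) (Z : ℂ × ℂ × ℂ) :
    weightedSum n Z =
      completeHomogeneous₃ n (‖Z.1‖ ^ 2) (‖Z.2.1‖ ^ 2) (‖Z.2.2‖ ^ 2) *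
        completeHomogeneous₂ n (‖Z.1‖ ^ 2) (‖Z.2.1‖ ^ 2) *
        completeHomogeneous₂ n (‖Z.1‖ ^ 2) (‖Z.2.2‖ ^ 2) := by
  simp only [completeHomogeneous₃, completeHomogeneous₂, mul_sum, sum_sigma', sum_mul]
  refine sum_nbij'
    (fun t => ⟨(t.2.2.2.2.2.1, t.2.2.2.2.2.2), ⟨(t.2.2.2.1, t.2.2.2.2.1),
      ⟨(t.1, t.2.1 + t.2.2.1), (t.2.1, t.2.2.1)⟩⟩⟩)
    (fun x => (x.2.2.1.1, x.2.2.2.1, x.2.2.2.2, x.2.1.1, x.2.1.2, x.1.1, x.1.2))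
    ?_ ?_ (fun _ _ => rfl) ?_ ?_
  · simp only [indexSet, mem_filter, mem_product, mem_range, mem_sigma,
      HasAntidiagonal.mem_antidiagonal, and_true]
    omega
  · simp only [indexSet, mem_filter, mem_product, mem_range, mem_sigma,
      HasAntidiagonal.mem_antidiagonal]
    omega
  · rintro ⟨⟨k₀, k₂⟩, ⟨j₀, j₁⟩, ⟨i₀, m⟩, i₁, i₂⟩ hx
    simp only [mem_sigma, HasAntidiagonal.mem_antidiagonal] at hx
    obtain rfl : i₁ + i₂ = m := hx.2.2.2
    rfl
  · intro t _
    simp only [← pow_mul]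
    ring

theorem weightedSum_le_Dfun_pow (n : ℕ) (Z : ℂ × ℂ × ℂ) : weightedSum n Z ≤ Dfun Z ^ n := by
  have hA : 0 ≤ ‖Z.1‖ ^ 2 := sq_nonneg _
  have hB : 0 ≤ ‖Z.2.1‖ ^ 2 := sq_nonneg _
  have hC : 0 ≤ ‖Z.2.2‖ ^ 2 := sq_nonneg _
  rw [weightedSum_eq_mul, Dfun, mul_pow, mul_pow]
  exact mul_le_mul
    (mul_le_mul (completeHomogeneous₃_le_add_pow hA hB hC n)
      (completeHomogeneous₂_le_add_pow hA hB n) (completeHomogeneous₂_nonneg hA hB n)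
      (by positivity))
    (completeHomogeneous₂_le_add_pow hA hC n) (completeHomogeneous₂_nonneg hA hC n) (by positivity)

theorem Dfun_nonneg (Z : ℂ × ℂ × ℂ) : 0 ≤ Dfun Z := by
  unfold Dfun; positivity

theorem weightedSum_nonneg (n : ℕ) (Z : ℂ × ℂ × ℂ) : 0 ≤ weightedSum n Z :=
  sum_nonneg fun _ _ => by positivity

theorem one_le_succ_pow_three_mul_add_two_div_two (n : ℕ) :
    (1 : ℝ) ≤ (n + 1) ^ 3 * (n + 2) / 2 := by
  have h : (1 : ℝ) ≤ n + 1 := by simp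
  rw [le_div_iff₀ two_pos]
  nlinarith [one_le_pow₀ (n := 3) h]

theorem log_succ_pow_three_mul_add_two_div_two_le (n : ℕ) :
    Real.log ((n + 1) ^ 3 * (n + 2) / 2 : ℝ) ≤ 4 * (n + 1) := by
  have hpos : (0 : ℝ) < n + 2 := by positivity
  calc Real.log ((n + 1) ^ 3 * (n + 2) / 2 : ℝ) ≤ Real.log ((n + 2) ^ 4) := by
        gcongr
        calc ((n + 1) ^ 3 * (n + 2) / 2 : ℝ) ≤ (n + 1) ^ 3 * (n + 2) :=
              half_le_self (by positivity)
          _ ≤ (n + 2) ^ 3 * (n + 2) := by gcongr; linarith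
          _ = (n + 2) ^ 4 := by ring
    _ = 4 * Real.log (n + 2) := by simp [Real.log_pow]
    _ ≤ 4 * (n + 1) := by linarith [Real.log_le_sub_one_of_pos hpos]

theorem weightedSum_le_and_log_bound :
    (∀ n : ℕ, 0 < n → ∀ Z : ℂ × ℂ × ℂ,
      weightedSum n Z ≤ ((n + 1) ^ 3 * (n + 2) / 2 : ℝ) * Dfun Z ^ n ∧
      (Z ≠ 0 →
        (1 / (n : ℝ)) * Real.log (weightedSum n Z / Dfun Z ^ n) ≤
          (1 / (n : ℝ)) * Real.log ((n + 1) ^ 3 * (n + 2) / 2 : ℝ))) ∧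
    ∃ C : ℝ, ∀ n : ℕ, 0 < n →
      (1 / (n : ℝ)) * Real.log ((n + 1) ^ 3 * (n + 2) / 2 : ℝ) ≤ C := by
  refine ⟨fun n _ Z => ⟨?_, fun _ => ?_⟩, ⟨8, fun n hn => ?_⟩⟩
  · exact (weightedSum_le_Dfun_pow n Z).trans <| le_mul_of_one_le_left
      (pow_nonneg (Dfun_nonneg Z) n) (one_le_succ_pow_three_mul_add_two_div_two n)
  · have hD := pow_nonneg (Dfun_nonneg Z) n
    have hratio : Real.log (weightedSum n Z / Dfun Z ^ n) ≤ 0 :=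
      Real.log_nonpos (div_nonneg (weightedSum_nonneg n Z) hD)
        (div_le_one_of_le₀ (weightedSum_le_Dfun_pow n Z) hD)
    have hconst := Real.log_nonneg (one_le_succ_pow_three_mul_add_two_div_two n)
    exact mul_le_mul_of_nonneg_left (hratio.trans hconst) (by positivity)
  · have hn' : (1 : ℝ) ≤ n := by exact_mod_cast hn
    rw [one_div_mul_eq_div, div_le_iff₀ (by positivity)]
    linarith [log_succ_pow_three_mul_add_two_div_two_le n]
end

section
/- For every α ∈ (0, 1/3) and every μ ∈ [0, 3], the function (w₀, w₁) ↦ |w₀|^{−2αμ} · |w₁|^{−(3−μ)α} · (|w₀|² + |w₁|²)^{−(1−α)} is integrable on the set {(w₀,w₁) ∈ ℂ² : 0 < |w₀| < 1, 0 < |w₁| < 1} with respect to Lebesgue measure on ℂ² (identifying ℂ² with ℝ⁴). -/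
open MeasureTheory Set Metric

/-!
Since `‖w₀‖, ‖w₁‖ ≤ (‖w₀‖² + ‖w₁‖²)^{1/2}`, the factor `(‖w₀‖² + ‖w₁‖²)^{-(1-α)}` is at most
`‖w₀‖^{-p} ‖w₁‖^{-q}` whenever `p, q ≥ 0` and `p + q = 2(1-α)`. Choosing `p = 1 - αμ` bounds
the integrand by `‖w₀‖^{-(1+αμ)} ‖w₁‖^{-(1+α)}`, a product of functions integrable on the unit
disc because both exponents exceed `-2` (this is where `αμ < 1` enters).
-/

lemma integrableOn_ball_norm_rpow_neg {E : Type*} [NormedAddCommGroup E] [NormedSpace ℝ E]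
    [FiniteDimensional ℝ E] [MeasurableSpace E] [BorelSpace E] (μ : Measure E)
    [μ.IsAddHaarMeasure] (hd : 1 ≤ Module.finrank ℝ E) {s : ℝ} (hs : s < Module.finrank ℝ E)
    (r : ℝ) :
    IntegrableOn (fun x : E => ‖x‖ ^ (-s)) (ball 0 r) μ :=
  integrableOn_ball_of_norm_le_rpow hd hs (C := 1)
    (ae_of_all _ fun x => by simp [abs_of_nonneg (Real.rpow_nonneg (norm_nonneg x) _)])
    (Measurable.aestronglyMeasurable (by fun_prop))

lemma integrableOn_ball_prod_ball_norm_rpow_neg {s t : ℝ} (hs : s < 2) (ht : t < 2)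
    (r₁ r₂ : ℝ) :
    IntegrableOn (fun w : ℂ × ℂ => ‖w.1‖ ^ (-s) * ‖w.2‖ ^ (-t)) (ball 0 r₁ ×ˢ ball 0 r₂) := by
  have hdim : Module.finrank ℝ ℂ = 2 := Complex.finrank_real_complex
  rw [IntegrableOn, Measure.volume_eq_prod, ← Measure.prod_restrict]
  exact (integrableOn_ball_norm_rpow_neg volume (by omega) (by simpa [hdim]) r₁).mul_prod
    (integrableOn_ball_norm_rpow_neg volume (by omega) (by simpa [hdim]) r₂)

lemma rpow_neg_sq_add_sq_le {x y p q c : ℝ} (hx : 0 < x) (hy : 0 < y) (hp : 0 ≤ p) (hq : 0 ≤ q)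
    (hpq : p + q = 2 * c) :
    (x ^ 2 + y ^ 2) ^ (-c) ≤ x ^ (-p) * y ^ (-q) := by
  have hxr : x ≤ √(x ^ 2 + y ^ 2) := Real.le_sqrt_of_sq_le (by nlinarith)
  have hyr : y ≤ √(x ^ 2 + y ^ 2) := Real.le_sqrt_of_sq_le (by nlinarith)
  have hr : (x ^ 2 + y ^ 2) ^ c = √(x ^ 2 + y ^ 2) ^ p * √(x ^ 2 + y ^ 2) ^ q := by
    rw [← Real.rpow_add (hx.trans_le hxr), Real.sqrt_eq_rpow, ← Real.rpow_mul (by positivity), hpq]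
    ring_nf
  have hmono : x ^ p * y ^ q ≤ (x ^ 2 + y ^ 2) ^ c := by
    rw [hr]
    gcongr
  rw [Real.rpow_neg (by positivity), Real.rpow_neg hx.le, Real.rpow_neg hy.le, ← mul_inv]
  exact inv_anti₀ (by positivity) hmono

theorem integrable_patch_U2 (α μ : ℝ) (hα : 0 < α) (hα' : α < 1 / 3)
    (hμ : 0 ≤ μ) (hμ' : μ ≤ 3) :
    IntegrableOn
      (fun w : ℂ × ℂ =>
        ‖w.1‖ ^ (-(2 * α * μ)) * ‖w.2‖ ^ (-((3 - μ) * α)) *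
          (‖w.1‖ ^ 2 + ‖w.2‖ ^ 2) ^ (-(1 - α)))
      {w : ℂ × ℂ | 0 < ‖w.1‖ ∧ ‖w.1‖ < 1 ∧
        0 < ‖w.2‖ ∧ ‖w.2‖ < 1} volume := by
  have hαμ : α * μ < 1 := by nlinarith
  have hdom := integrableOn_ball_prod_ball_norm_rpow_neg
    (s := 1 + α * μ) (t := 1 + α) (by linarith) (by linarith) 1 1
  refine (hdom.mono_set fun w hw => ⟨mem_ball_zero_iff.2 hw.2.1, mem_ball_zero_iff.2 hw.2.2.2⟩)
    |>.mono' (by fun_prop) (ae_restrict_of_forall_mem ?_ ?_)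
  · measurability
  rintro w ⟨hx, -, hy, -⟩
  have hfactor := rpow_neg_sq_add_sq_le hx hy (p := 1 - α * μ) (q := 1 - 2 * α + α * μ)
    (c := 1 - α) (by linarith) (by nlinarith) (by ring)
  rw [Real.norm_of_nonneg (by positivity)]
  calc _ ≤ ‖w.1‖ ^ (-(2 * α * μ)) * ‖w.2‖ ^ (-((3 - μ) * α)) *
        (‖w.1‖ ^ (-(1 - α * μ)) * ‖w.2‖ ^ (-(1 - 2 * α + α * μ))) := by
        gcongr
    _ = ‖w.1‖ ^ (-(1 + α * μ)) * ‖w.2‖ ^ (-(1 + α)) := by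
        rw [mul_mul_mul_comm, ← Real.rpow_add hx, ← Real.rpow_add hy]
        congr 2 <;> ring
end

section
/- For every α > 1/3, the function (w₀, w₁) ↦ |w₀|^{−6α} · (|w₀|² + |w₁|²)^{α−1} is not integrable on the set {(w₀,w₁) ∈ ℂ² : 0 < |w₀| < 1, 0 < |w₁| < 1} with respect to Lebesgue measure on ℂ² (identifying ℂ² with ℝ⁴); its integral equals +∞. -/
/-!
On the punctured bidisc the integrand dominates a positive multiple of `‖w₀‖⁻²`: for `α ≤ 1`
because `‖w₀‖² + ‖w₁‖² ≤ 2` and `‖w₀‖^(-6α) ≥ ‖w₀‖⁻²`, for `α > 1` because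
`‖w₀‖² + ‖w₁‖² ≥ ‖w₀‖²` and `‖w₀‖^(-4α-2) ≥ ‖w₀‖⁻²`. By Fubini, integrability of `‖w₀‖⁻²` on the
bidisc amounts to integrability of `‖z‖⁻²` on the unit disc of `ℂ ≅ ℝ²`, which fails because `2`
is the real dimension; in polar coordinates it becomes `∫₀¹ r⁻¹ dr = ∞`.
-/

open MeasureTheory Set Metric Module

section NormRpow

variable {E : Type*} [NormedAddCommGroup E] [NormedSpace ℝ E] [FiniteDimensional ℝ E]
  [Nontrivial E] [MeasurableSpace E] [BorelSpace E] (μ : Measure E) [μ.IsAddHaarMeasure]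

theorem integrableOn_ball_norm_rpow_neg_iff {r s : ℝ} (hr : 0 < r) :
    IntegrableOn (fun x : E => ‖x‖ ^ (-s)) (ball 0 r) μ ↔ s < finrank ℝ E := by
  rw [integrableOn_fun_norm_addHaar μ (f := fun y => y ^ (-s))]
  have hpow : EqOn (fun y : ℝ => y ^ (finrank ℝ E - 1) • y ^ (-s))
      (fun y => y ^ ((finrank ℝ E : ℝ) - 1 - s)) (Ioo 0 r) := by
    intro y hy
    simp only [smul_eq_mul]
    rw [← Real.rpow_natCast, ← Real.rpow_add hy.1, Nat.cast_sub finrank_pos,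
      Nat.cast_one, sub_eq_add_neg _ s]
  rw [integrableOn_congr_fun hpow measurableSet_Ioo, intervalIntegral.integrableOn_Ioo_rpow_iff hr]
  constructor <;> intro h <;> linarith

end NormRpow

theorem integrableOn_prod_comp_fst_iff {α β E : Type*} [MeasurableSpace α] [MeasurableSpace β]
    [NormedAddCommGroup E] {μ : Measure α} {ν : Measure β} [SFinite μ] [SFinite ν] {f : α → E}
    {s : Set α} {t : Set β} (ht₀ : ν t ≠ 0) (ht : ν t ≠ ⊤) :
    IntegrableOn (fun w : α × β => f w.1) (s ×ˢ t) (μ.prod ν) ↔ IntegrableOn f s μ := by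
  have : IsFiniteMeasure (ν.restrict t) := isFiniteMeasure_restrict.mpr ht
  rw [IntegrableOn, ← Measure.prod_restrict]
  exact Integrable.comp_fst_iff (mt Measure.restrict_eq_zero.1 ht₀)

theorem min_one_two_rpow_mul_rpow_neg_two_le {α x y : ℝ} (hα : 1 / 3 ≤ α) (hx₀ : 0 < x)
    (hx₁ : x ≤ 1) (hy₀ : 0 ≤ y) (hy₁ : y ≤ 1) :
    min 1 (2 ^ (α - 1)) * x ^ (-2 : ℝ) ≤ x ^ (-(6 * α)) * (x ^ 2 + y ^ 2) ^ (α - 1) := by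
  have hsum : 0 < x ^ 2 + y ^ 2 := by positivity
  rcases le_or_gt α 1 with h | h
  · have h₁ : (2 : ℝ) ^ (α - 1) ≤ (x ^ 2 + y ^ 2) ^ (α - 1) :=
      Real.rpow_le_rpow_of_nonpos hsum (by nlinarith) (by linarith)
    have h₂ : x ^ (-2 : ℝ) ≤ x ^ (-(6 * α)) :=
      Real.rpow_le_rpow_of_exponent_ge hx₀ hx₁ (by linarith)
    calc min 1 (2 ^ (α - 1)) * x ^ (-2 : ℝ) ≤ 2 ^ (α - 1) * x ^ (-2 : ℝ) := by
          gcongr; exact min_le_right _ _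
      _ ≤ (x ^ 2 + y ^ 2) ^ (α - 1) * x ^ (-(6 * α)) := by gcongr
      _ = _ := mul_comm _ _
  · have h₁ : (x ^ 2) ^ (α - 1) ≤ (x ^ 2 + y ^ 2) ^ (α - 1) :=
      Real.rpow_le_rpow (by positivity) (by nlinarith) (by linarith)
    calc min 1 (2 ^ (α - 1)) * x ^ (-2 : ℝ) ≤ x ^ (-2 : ℝ) := by
          exact mul_le_of_le_one_left (by positivity) (min_le_left _ _)
      _ ≤ x ^ (-(6 * α) + 2 * (α - 1)) :=
          Real.rpow_le_rpow_of_exponent_ge hx₀ hx₁ (by linarith)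
      _ = x ^ (-(6 * α)) * (x ^ 2) ^ (α - 1) := by
          rw [Real.rpow_add hx₀, Real.rpow_mul hx₀.le, Real.rpow_two]
      _ ≤ _ := by gcongr

theorem setLIntegral_ofReal_eq_top_of_not_integrableOn {X : Type*} [MeasurableSpace X]
    {μ : Measure X} {f : X → ℝ} {s : Set X} (hs : MeasurableSet s)
    (hf_meas : AEStronglyMeasurable f (μ.restrict s)) (hf_nonneg : ∀ x ∈ s, 0 ≤ f x)
    (hf : ¬ IntegrableOn f s μ) :
    ∫⁻ x in s, ENNReal.ofReal (f x) ∂μ = ⊤ := by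
  by_contra h
  exact hf ((lintegral_ofReal_ne_top_iff_integrable hf_meas
    (ae_restrict_of_forall_mem hs hf_nonneg)).1 h)

theorem not_integrableOn_punctured_bidisc_of_le {f : ℂ × ℂ → ℝ} {c : ℝ} (hc : 0 < c)
    (hf : ∀ w ∈ (ball (0 : ℂ) 1 \ {0}) ×ˢ (ball (0 : ℂ) 1 \ {0}),
      c * ‖w.1‖ ^ (-2 : ℝ) ≤ f w) :
    ¬ IntegrableOn f ((ball (0 : ℂ) 1 \ {0}) ×ˢ (ball (0 : ℂ) 1 \ {0})) := by
  have hD : (ball (0 : ℂ) 1 \ {0} : Set ℂ) =ᵐ[volume] ball 0 1 :=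
    sdiff_null_ae_eq_self (measure_singleton 0)
  have hD_meas : MeasurableSet (ball (0 : ℂ) 1 \ {0}) :=
    measurableSet_ball.diff (measurableSet_singleton 0)
  intro hf_int
  have hg : IntegrableOn (fun w : ℂ × ℂ => ‖w.1‖ ^ (-2 : ℝ))
      ((ball (0 : ℂ) 1 \ {0}) ×ˢ (ball (0 : ℂ) 1 \ {0})) := by
    refine (hf_int.const_mul c⁻¹).mono' (by fun_prop : Measurable _).aestronglyMeasurable
      (ae_restrict_of_forall_mem (hD_meas.prod hD_meas) fun w hw => ?_)
    rw [Real.norm_of_nonneg (by positivity), le_inv_mul_iff₀ hc]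
    exact hf w hw
  rw [Measure.volume_eq_prod,
    integrableOn_prod_comp_fst_iff (f := fun z : ℂ => ‖z‖ ^ (-2 : ℝ))
      (by rw [measure_congr hD]; exact (measure_ball_pos _ _ one_pos).ne')
      (by rw [measure_congr hD]; exact measure_ball_lt_top.ne),
    integrableOn_congr_set_ae hD, integrableOn_ball_norm_rpow_neg_iff volume one_pos] at hg
  norm_num at hg

theorem not_integrable_blowup_model (α : ℝ) (hα : 1 / 3 < α) :
    ¬ IntegrableOn
        (fun w : ℂ × ℂ =>
          ‖w.1‖ ^ (-(6 * α)) *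
            (‖w.1‖ ^ 2 + ‖w.2‖ ^ 2) ^ (α - 1))
        {w : ℂ × ℂ | 0 < ‖w.1‖ ∧ ‖w.1‖ < 1 ∧
          0 < ‖w.2‖ ∧ ‖w.2‖ < 1} volume ∧
    ∫⁻ w in {w : ℂ × ℂ | 0 < ‖w.1‖ ∧ ‖w.1‖ < 1 ∧
        0 < ‖w.2‖ ∧ ‖w.2‖ < 1},
      ENNReal.ofReal
        (‖w.1‖ ^ (-(6 * α)) *
          (‖w.1‖ ^ 2 + ‖w.2‖ ^ 2) ^ (α - 1)) = ⊤ := by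
  have hS : {w : ℂ × ℂ | 0 < ‖w.1‖ ∧ ‖w.1‖ < 1 ∧ 0 < ‖w.2‖ ∧ ‖w.2‖ < 1} =
      (ball (0 : ℂ) 1 \ {0}) ×ˢ (ball (0 : ℂ) 1 \ {0}) := by
    ext w
    simp only [mem_ofPred_eq, mem_prod, mem_sdiff, mem_ball_zero_iff, mem_singleton_iff,
      norm_pos_iff]
    tauto
  refine ⟨?hnot, setLIntegral_ofReal_eq_top_of_not_integrableOn (by measurability)
    (by fun_prop) (fun w _ => by positivity) ?hnot⟩
  rw [hS]
  refine not_integrableOn_punctured_bidisc_of_le (c := min 1 (2 ^ (α - 1)))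
    (lt_min one_pos (by positivity)) ?_
  rintro w ⟨⟨hw₁, hw₁₀⟩, hw₂, -⟩
  simp only [mem_ball_zero_iff, mem_singleton_iff] at hw₁ hw₁₀ hw₂
  exact min_one_two_rpow_mul_rpow_neg_two_le hα.le (norm_pos_iff.2 hw₁₀) hw₁.le (norm_nonneg _)
    hw₂.le
end

section
/- For every α > 1/3, the integral over {(w₀,w₁) ∈ ℂ² : 0 < |w₀| < 1, 0 < |w₁| < 1} of the function (w₀,w₁) ↦ ((1+|w₀|²+|w₁|²)(1+|w₀|²)(|w₀|²+|w₁|²))^α · |w₀|^{−6α} · (1+|w₀|²+|w₁|²)^{−2} · (|w₀|²+|w₁|²)^{−1}, with respect to Lebesgue measure on ℂ², equals +∞. -/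
/-!
On the punctured bidisc write `a = ‖w₀‖`, `b = ‖w₁‖`, `x = a² + b² ≤ 2`. The factors
`(1 + x)^α (1 + a²)^α ≥ 1` and `(1 + x)⁻² ≥ 1/9` are harmless, and `x^(α-1)` is at least
`2^(α-1)` when `α ≤ 1` and at least `a^(2(α-1))` when `α ≥ 1`. So the integrand dominates
`c · a^p` with `p = 2 max(α - 1, 0) - 6α`, and `p ≤ -2` exactly because `α > 1/3`.
By Tonelli the integral of `c · ‖w₀‖^p` over the bidisc is `c · π · ∫_{0<|z|<1} |z|^p`,
and `|z|^p` is not integrable at the origin of `ℂ ≅ ℝ²` for `p ≤ -2` (polar coordinates).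
-/

open MeasureTheory Metric Set
open scoped ENNReal

theorem setLIntegral_prod_comp_fst {α β : Type*} [MeasurableSpace α] [MeasurableSpace β]
    {μ : Measure α} {ν : Measure β} [SFinite μ] [SFinite ν] {f : α → ℝ≥0∞}
    (hf : Measurable f) (s : Set α) (t : Set β) :
    ∫⁻ z in s ×ˢ t, f z.1 ∂μ.prod ν = (∫⁻ x in s, f x ∂μ) * ν t := by
  rw [setLIntegral_prod (fun z ↦ f z.1) (hf.comp measurable_fst).aemeasurable]
  simp_rw [setLIntegral_const]
  exact lintegral_mul_const _ hf

section NormRpow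

variable {E : Type*} [NormedAddCommGroup E] [NormedSpace ℝ E] [FiniteDimensional ℝ E]
  [Nontrivial E] [MeasurableSpace E] [BorelSpace E] (μ : Measure E) [μ.IsAddHaarMeasure]
  {p r : ℝ}

theorem not_integrableOn_norm_rpow_ball (hp : p ≤ -Module.finrank ℝ E) (hr : 0 < r) :
    ¬IntegrableOn (fun x : E ↦ ‖x‖ ^ p) (ball 0 r) μ := by
  have hd : 1 ≤ Module.finrank ℝ E := Module.finrank_pos
  have hpow : EqOn (fun y : ℝ ↦ y ^ (Module.finrank ℝ E - 1) • y ^ p)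
      (fun y ↦ y ^ (p + (Module.finrank ℝ E - 1 : ℕ))) (Ioo 0 r) := fun y hy ↦ by
    simp only [smul_eq_mul]
    rw [Real.rpow_add hy.1, Real.rpow_natCast, mul_comm]
  rw [integrableOn_fun_norm_addHaar μ (f := fun y ↦ y ^ p),
    integrableOn_congr_fun hpow measurableSet_Ioo, intervalIntegral.integrableOn_Ioo_rpow_iff hr]
  push_cast [hd]
  linarith

theorem lintegral_norm_rpow_ball_eq_top (hp : p ≤ -Module.finrank ℝ E) (hr : 0 < r) :
    ∫⁻ x in ball 0 r, ENNReal.ofReal (‖x‖ ^ p) ∂μ = ∞ := by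
  by_contra h
  refine not_integrableOn_norm_rpow_ball μ hp hr
    ((lintegral_ofReal_ne_top_iff_integrable ?_ ?_).mp h)
  · exact (measurable_norm.pow_const p).aestronglyMeasurable
  · exact ae_of_all _ fun x ↦ by positivity

end NormRpow

noncomputable def limitPotentialIntegrand (α a b : ℝ) : ℝ :=
  ((1 + a ^ 2 + b ^ 2) * (1 + a ^ 2) * (a ^ 2 + b ^ 2)) ^ α * a ^ (-(6 * α)) *
    (1 + a ^ 2 + b ^ 2) ^ (-(2 : ℝ)) * (a ^ 2 + b ^ 2) ^ (-(1 : ℝ))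

theorem min_one_two_rpow_mul_rpow_max_le {s x y : ℝ} (hy : 0 < y) (hyx : y ≤ x) (hx : x ≤ 2) :
    min 1 (2 ^ s) * y ^ max s 0 ≤ x ^ s := by
  rcases le_total s 0 with hs | hs
  · rw [max_eq_right hs, Real.rpow_zero, mul_one]
    exact (min_le_right _ _).trans (Real.rpow_le_rpow_of_nonpos (hy.trans_le hyx) hx hs)
  · rw [max_eq_left hs]
    calc min 1 (2 ^ s) * y ^ s ≤ 1 * y ^ s := by gcongr; exact min_le_left _ _
      _ ≤ x ^ s := by rw [one_mul]; exact Real.rpow_le_rpow hy.le hyx hs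

theorem exists_mul_rpow_le_limitPotentialIntegrand {α : ℝ} (hα : 1 / 3 < α) :
    ∃ c > 0, ∃ p ≤ (-2 : ℝ), ∀ a b : ℝ, 0 < a → a ≤ 1 → b ^ 2 ≤ 1 →
      c * a ^ p ≤ limitPotentialIntegrand α a b := by
  refine ⟨min 1 (2 ^ (α - 1)) / 9, by positivity, 2 * max (α - 1) 0 - 6 * α,
    by cases max_cases (α - 1) 0 <;> linarith, fun a b ha ha1 hb ↦ ?_⟩
  set x := a ^ 2 + b ^ 2
  set u := 1 + a ^ 2 + b ^ 2
  have hx : 0 < x := by positivity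
  have hu : 0 < u := by positivity
  have hu3 : u ≤ 3 := by nlinarith
  have hx_growth : min 1 (2 ^ (α - 1)) * (a ^ 2) ^ max (α - 1) 0 ≤ x ^ (α - 1) :=
    min_one_two_rpow_mul_rpow_max_le (by positivity) (by simp [x]; positivity)
      (by nlinarith)
  have hu_growth : 1 ≤ u ^ α * (1 + a ^ 2) ^ α :=
    one_le_mul_of_one_le_of_one_le (Real.one_le_rpow (by linarith) (by linarith))
      (Real.one_le_rpow (by nlinarith) (by linarith))
  have hu_decay : 1 / 9 ≤ u ^ (-(2 : ℝ)) := by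
    rw [Real.rpow_neg hu.le, Real.rpow_two, one_div]
    exact inv_anti₀ (by positivity) (by nlinarith [hu.le])
  calc min 1 (2 ^ (α - 1)) / 9 * a ^ (2 * max (α - 1) 0 - 6 * α)
      = 1 * (1 / 9) * (min 1 (2 ^ (α - 1)) * (a ^ 2) ^ max (α - 1) 0) * a ^ (-(6 * α)) := by
        rw [sub_eq_add_neg (2 * _), Real.rpow_add ha, Real.rpow_mul ha.le, Real.rpow_two]
        ring
    _ ≤ u ^ α * (1 + a ^ 2) ^ α * u ^ (-(2 : ℝ)) * x ^ (α - 1) * a ^ (-(6 * α)) := by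
        gcongr
    _ = limitPotentialIntegrand α a b := by
        rw [limitPotentialIntegrand, Real.mul_rpow (by positivity) hx.le,
          Real.mul_rpow hu.le (by positivity), Real.rpow_sub_one hx.ne', Real.rpow_neg_one]
        ring

theorem lintegral_limit_potential_eq_top (α : ℝ) (hα : 1 / 3 < α) :
    ∫⁻ w in {w : ℂ × ℂ | 0 < ‖w.1‖ ∧ ‖w.1‖ < 1 ∧
        0 < ‖w.2‖ ∧ ‖w.2‖ < 1},
      ENNReal.ofReal
        (((1 + ‖w.1‖ ^ 2 + ‖w.2‖ ^ 2) *
              (1 + ‖w.1‖ ^ 2) *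
              (‖w.1‖ ^ 2 + ‖w.2‖ ^ 2)) ^ α *
          ‖w.1‖ ^ (-(6 * α)) *
          (1 + ‖w.1‖ ^ 2 + ‖w.2‖ ^ 2) ^ (-(2 : ℝ)) *
          (‖w.1‖ ^ 2 + ‖w.2‖ ^ 2) ^ (-(1 : ℝ))) = ⊤ := by
  obtain ⟨c, hc, p, hp, hbound⟩ := exists_mul_rpow_le_limitPotentialIntegrand hα
  set A : Set ℂ := ball 0 1 \ {0}
  have hA_open : IsOpen A := isOpen_ball.sdiff isClosed_singleton
  have hA_pos : volume A ≠ 0 := hA_open.measure_ne_zero _ ⟨1 / 2, by norm_num [A]⟩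
  have hS : {w : ℂ × ℂ | 0 < ‖w.1‖ ∧ ‖w.1‖ < 1 ∧ 0 < ‖w.2‖ ∧ ‖w.2‖ < 1} = A ×ˢ A := by
    ext; simp [A, and_comm, and_assoc]
  have hdim : p ≤ -Module.finrank ℝ ℂ := by simpa using hp
  rw [hS, ← top_le_iff]
  calc ⊤ = ENNReal.ofReal c * ((∫⁻ z in A, ENNReal.ofReal (‖z‖ ^ p)) * volume A) := by
        rw [setLIntegral_congr (sdiff_null_ae_eq_self (measure_singleton 0)),
          lintegral_norm_rpow_ball_eq_top volume hdim one_pos, ENNReal.top_mul hA_pos,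
          ENNReal.mul_top (by simpa using hc)]
    _ = ENNReal.ofReal c * ∫⁻ w in A ×ˢ A, ENNReal.ofReal (‖w.1‖ ^ p) := by
        rw [Measure.volume_eq_prod, setLIntegral_prod_comp_fst
          (f := fun z : ℂ ↦ ENNReal.ofReal (‖z‖ ^ p)) (by fun_prop)]
    _ = ∫⁻ w in A ×ˢ A, ENNReal.ofReal (c * ‖w.1‖ ^ p) := by
        simp_rw [ENNReal.ofReal_mul hc.le]
        exact (lintegral_const_mul' _ _ ENNReal.ofReal_ne_top).symm
    _ ≤ _ := setLIntegral_mono' (hA_open.measurableSet.prod hA_open.measurableSet) fun w hw ↦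
        ENNReal.ofReal_le_ofReal <| hbound _ _ (norm_pos_iff.mpr hw.1.2)
          (mem_ball_zero_iff.mp hw.1.1).le
          (pow_le_one₀ (norm_nonneg _) (mem_ball_zero_iff.mp hw.2.1).le)
end
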